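/- For a filtration I = {I_m} of a Noetherian ring R, define K(I)_m = {f ∈ R : ν̄_I(f) ≥ m}. Then K(I) = {K(I)_m} is a filtration of ideals in R containing I, and ν̄_I = ν̄_{K(I)}. Moreover, K(I) is the unique largest filtration J with ν̄_I = ν̄_J. -/

import Mathlib

open Filter Topology Polynomial
open scoped ENNReal

/-- A filtration `I = {I_m}` of ideals of `R`: `I_0 = R`, `I_{n+1} ⊆ I_n`,
and `I_m · I_n ⊆ I_{m+n}`. -/
structure RingFiltration (R : Type*) [CommRing R] where
  I : ℕ → Ideal R
  top_eq : I 0 = ⊤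
  antitone_succ : ∀ n, I (n + 1) ≤ I n
  mul_le : ∀ m n, I m * I n ≤ I (m + n)

namespace RingFiltration
variable {R : Type*} [CommRing R] (F : RingFiltration R)

/-- The order function `ν_I(f) = sup {m : f ∈ I_m}`, viewed in `[0,∞]`. -/
noncomputable def nu (f : R) : ℝ≥0∞ :=
  sSup ((fun m : ℕ => (m : ℝ≥0∞)) '' {m | f ∈ F.I m})

/-- The asymptotic Samuel function `ν̄_I(f) = lim_n ν_I(f^n)/n` (the limit exists and
equals the limsup used here to define it). -/
noncomputable def nubar (f : R) : ℝ≥0∞ :=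
  Filter.limsup (fun n : ℕ => F.nu (f ^ n) / (n : ℝ≥0∞)) Filter.atTop

end RingFiltration

/-!
The key is the description `ν̄_I(f) = sup {t / m : m > 0, f ^ m ∈ I_t}`: the limsup defining
`ν̄_I` is dominated by these ratios, and each ratio `t / m` is attained along the multiples of
`m`. From it, `ν̄_I(fg) ≥ ν̄_I(f) + ν̄_I(g)`, and `ν̄_I(f + g) ≥ min (ν̄_I(f), ν̄_I(g))` because
`f ^ N, g ^ N ∈ I_u` forces `(f + g) ^ (N (n + 1)) ∈ I_(n u)` by the binomial theorem; hence the
`K(I)_m` are ideals forming a filtration. As `I ⊆ K(I)` and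
`ν_{K(I)}(f ^ n) ≤ ν̄_I(f ^ n) ≤ n ν̄_I(f)`, the two asymptotic functions agree, and
`f ∈ J_m` gives `ν̄_J(f) ≥ m`, so every `J` with `ν̄_J = ν̄_I` lies in `K(I)`.
-/

theorem ENNReal.le_of_forall_natCast_div_succ_mul_le {a b : ℝ≥0∞}
    (h : ∀ n : ℕ, (n : ℝ≥0∞) / (n + 1) * a ≤ b) : a ≤ b := by
  have hlim : Tendsto (fun n : ℕ => (n : ℝ≥0∞) / (n + 1)) atTop (𝓝 1) := by
    refine (ENNReal.tendsto_coe.mpr (tendsto_natCast_div_add_atTop (1 : NNReal))).congr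
      fun n => ?_
    rw [ENNReal.coe_div (by positivity)]
    simp
  simpa using le_of_tendsto' (ENNReal.Tendsto.mul_const hlim (Or.inl one_ne_zero)) h

theorem ENNReal.natCast_mul_div_natCast_mul (a b : ℕ) {k : ℕ} (hk : k ≠ 0) :
    ((k * a : ℕ) : ℝ≥0∞) / ((k * b : ℕ) : ℝ≥0∞) = a / b := by
  push_cast
  exact ENNReal.mul_div_mul_left _ _ (by exact_mod_cast hk) (ENNReal.natCast_ne_top k)

namespace RingFiltration
variable {R : Type*} [CommRing R] (F : RingFiltration R)

theorem antitone_I : Antitone F.I :=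
  antitone_nat_of_succ_le F.antitone_succ

theorem pow_mem_I {f : R} {t : ℕ} (h : f ∈ F.I t) (k : ℕ) : f ^ k ∈ F.I (k * t) := by
  induction k with
  | zero => simp [F.top_eq]
  | succ k ih =>
      rw [pow_succ, Nat.succ_mul]
      exact F.mul_le _ _ (Ideal.mul_mem_mul ih h)

theorem pow_mem_I_of_pow_mem {f : R} {N u : ℕ} (h : f ^ N ∈ F.I u) (i : ℕ) :
    f ^ i ∈ F.I (i / N * u) := by
  have hi : f ^ i = (f ^ N) ^ (i / N) * f ^ (i % N) := by
    rw [← pow_mul, ← pow_add, Nat.div_add_mod]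
  rw [hi]
  exact Ideal.mul_mem_right _ _ (F.pow_mem_I h _)

theorem le_nubar_of_pow_mem {f : R} {m t : ℕ} (hm : 0 < m) (h : f ^ m ∈ F.I t) :
    (t : ℝ≥0∞) / m ≤ F.nubar f := by
  refine le_limsup_of_frequently_le (frequently_atTop.mpr fun a => ?_) (by isBoundedDefault)
  refine ⟨(a + 1) * m, le_mul_of_le_of_one_le (Nat.le_succ a) hm, ?_⟩
  have hmem : f ^ ((a + 1) * m) ∈ F.I ((a + 1) * t) := by
    rw [mul_comm (a + 1) m, pow_mul]
    exact F.pow_mem_I h _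
  rw [← ENNReal.natCast_mul_div_natCast_mul t m (Nat.succ_ne_zero a)]
  exact ENNReal.div_le_div_right (le_sSup ⟨_, hmem, rfl⟩ : (((a + 1) * t : ℕ) : ℝ≥0∞) ≤ F.nu _) _

theorem nubar_le_of_forall_pow_mem {f : R} {c : ℝ≥0∞}
    (h : ∀ m t : ℕ, 0 < m → f ^ m ∈ F.I t → (t : ℝ≥0∞) / m ≤ c) : F.nubar f ≤ c := by
  refine limsup_le_of_le (by isBoundedDefault) ?_
  filter_upwards [eventually_gt_atTop 0] with n hn
  refine ENNReal.div_le_of_le_mul (sSup_le ?_)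
  rintro _ ⟨t, ht, rfl⟩
  exact (ENNReal.div_le_iff_le_mul (by simp [hn.ne']) (by simp)).mp (h n t hn ht)

def powLevels (f : R) : Set (ℕ × ℕ) := {p | 0 < p.1 ∧ f ^ p.1 ∈ F.I p.2}

theorem one_zero_mem_powLevels (f : R) : (1, 0) ∈ F.powLevels f :=
  ⟨one_pos, by simp [F.top_eq]⟩

theorem nubar_eq_biSup (f : R) :
    F.nubar f = ⨆ p ∈ F.powLevels f, (p.2 : ℝ≥0∞) / p.1 :=
  le_antisymm
    (F.nubar_le_of_forall_pow_mem fun m t hm ht =>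
      le_biSup (fun p : ℕ × ℕ => (p.2 : ℝ≥0∞) / p.1) (show (m, t) ∈ F.powLevels f from ⟨hm, ht⟩))
    (iSup₂_le fun _ hp => F.le_nubar_of_pow_mem hp.1 hp.2)

theorem le_nubar_of_mem {f : R} {m : ℕ} (h : f ∈ F.I m) : (m : ℝ≥0∞) ≤ F.nubar f := by
  simpa using F.le_nubar_of_pow_mem (f := f) one_pos (by simpa using h)

theorem nubar_mono {G : RingFiltration R} (h : ∀ m, F.I m ≤ G.I m) (f : R) :
    F.nubar f ≤ G.nubar f :=
  F.nubar_le_of_forall_pow_mem fun _ _ hm ht => G.le_nubar_of_pow_mem hm (h _ ht)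

theorem nubar_pow_le (f : R) {n : ℕ} (hn : 0 < n) : F.nubar (f ^ n) ≤ n * F.nubar f := by
  refine F.nubar_le_of_forall_pow_mem fun k t hk ht => ?_
  rw [← pow_mul] at ht
  rw [← ENNReal.natCast_mul_div_natCast_mul t k hn.ne', Nat.cast_mul, mul_div_assoc]
  exact mul_le_mul_right (F.le_nubar_of_pow_mem (Nat.mul_pos hn hk) ht) _

theorem nubar_le_nubar_mul (r f : R) : F.nubar f ≤ F.nubar (r * f) :=
  F.nubar_le_of_forall_pow_mem fun _ _ hm ht =>
    F.le_nubar_of_pow_mem hm (by rw [mul_pow]; exact Ideal.mul_mem_left _ _ ht)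

theorem nubar_add_nubar_le_nubar_mul (f g : R) : F.nubar f + F.nubar g ≤ F.nubar (f * g) := by
  rw [F.nubar_eq_biSup f, F.nubar_eq_biSup g]
  refine ENNReal.biSup_add_biSup_le ⟨_, F.one_zero_mem_powLevels f⟩
    ⟨_, F.one_zero_mem_powLevels g⟩ fun ⟨a, s⟩ ⟨ha, hs⟩ ⟨b, t⟩ ⟨hb, ht⟩ => ?_
  have hmem : (f * g) ^ (a * b) ∈ F.I (b * s + a * t) := by
    rw [mul_pow, pow_mul, mul_comm a b, pow_mul]
    exact F.mul_le _ _ (Ideal.mul_mem_mul (F.pow_mem_I hs b) (F.pow_mem_I ht a))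
  have hratio : ((b * s + a * t : ℕ) : ℝ≥0∞) / ((a * b : ℕ) : ℝ≥0∞) = s / a + t / b := by
    rw [Nat.cast_add, ENNReal.add_div, mul_comm a b,
      ENNReal.natCast_mul_div_natCast_mul s a hb.ne', mul_comm b a,
      ENNReal.natCast_mul_div_natCast_mul t b ha.ne']
  exact hratio ▸ F.le_nubar_of_pow_mem (Nat.mul_pos ha hb) hmem

theorem add_pow_mem_I {f g : R} {N u : ℕ} (hN : 0 < N) (hf : f ^ N ∈ F.I u)
    (hg : g ^ N ∈ F.I u) (n : ℕ) : (f + g) ^ (N * (n + 1)) ∈ F.I (n * u) := by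
  rw [add_pow]
  refine Ideal.sum_mem _ fun i hi => Ideal.mul_mem_right _ _ ?_
  have hdiv : n ≤ i / N + (N * (n + 1) - i) / N := by
    have := Nat.add_div_le_div_add_div_add_one i (N * (n + 1) - i) N
    rw [Nat.add_sub_cancel' (by simpa [Nat.lt_succ_iff] using hi),
      Nat.mul_div_cancel_left _ hN] at this
    omega
  refine F.antitone_I (Nat.mul_le_mul_right u hdiv) ?_
  rw [add_mul]
  exact F.mul_le _ _ (Ideal.mul_mem_mul (F.pow_mem_I_of_pow_mem hf i)
    (F.pow_mem_I_of_pow_mem hg _))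

theorem le_nubar_add_of_pow_mem {f g : R} {N u : ℕ} (hN : 0 < N) (hf : f ^ N ∈ F.I u)
    (hg : g ^ N ∈ F.I u) : (u : ℝ≥0∞) / N ≤ F.nubar (f + g) := by
  refine ENNReal.le_of_forall_natCast_div_succ_mul_le fun n => ?_
  have hratio : ((n * u : ℕ) : ℝ≥0∞) / ((N * (n + 1) : ℕ) : ℝ≥0∞)
      = (n : ℝ≥0∞) / (n + 1) * ((u : ℝ≥0∞) / N) := by
    push_cast
    rw [div_eq_mul_inv, div_eq_mul_inv, div_eq_mul_inv, ENNReal.mul_inv (by simp) (by simp)]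
    ring
  exact hratio ▸ F.le_nubar_of_pow_mem (Nat.mul_pos hN n.succ_pos) (F.add_pow_mem_I hN hf hg n)

theorem nubar_inf_nubar_le_nubar_add (f g : R) : F.nubar f ⊓ F.nubar g ≤ F.nubar (f + g) := by
  rw [F.nubar_eq_biSup f, F.nubar_eq_biSup g, biSup_inf_biSup]
  refine iSup₂_le fun ⟨⟨a, s⟩, ⟨b, t⟩⟩ ⟨⟨ha, hs⟩, ⟨hb, ht⟩⟩ => ?_
  have hf : f ^ (a * b) ∈ F.I (b * s) := by rw [pow_mul]; exact F.pow_mem_I hs b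
  have hg : g ^ (a * b) ∈ F.I (a * t) := by rw [mul_comm a b, pow_mul]; exact F.pow_mem_I ht a
  have hfs : (s : ℝ≥0∞) / a = ((b * s : ℕ) : ℝ≥0∞) / ((a * b : ℕ) : ℝ≥0∞) := by
    rw [mul_comm a b, ENNReal.natCast_mul_div_natCast_mul s a hb.ne']
  have hgt : (t : ℝ≥0∞) / b = ((a * t : ℕ) : ℝ≥0∞) / ((a * b : ℕ) : ℝ≥0∞) := by
    rw [ENNReal.natCast_mul_div_natCast_mul t b ha.ne']
  rcases le_total (b * s) (a * t) with hle | hle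
  · exact (inf_le_left.trans_eq hfs).trans
      (F.le_nubar_add_of_pow_mem (Nat.mul_pos ha hb) hf (F.antitone_I hle hg))
  · exact (inf_le_right.trans_eq hgt).trans
      (F.le_nubar_add_of_pow_mem (Nat.mul_pos ha hb) (F.antitone_I hle hf) hg)

/-- The ideal `K(I)_m`. -/
noncomputable def saturationIdeal (m : ℕ) : Ideal R where
  carrier := {f | (m : ℝ≥0∞) ≤ F.nubar f}
  add_mem' ha hb := (le_inf ha hb).trans (F.nubar_inf_nubar_le_nubar_add _ _)
  zero_mem' := F.le_nubar_of_mem (F.I m).zero_mem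
  smul_mem' r _ hf := hf.trans (F.nubar_le_nubar_mul r _)

theorem mem_saturationIdeal {m : ℕ} {f : R} :
    f ∈ F.saturationIdeal m ↔ (m : ℝ≥0∞) ≤ F.nubar f :=
  Iff.rfl

noncomputable def saturation : RingFiltration R where
  I := F.saturationIdeal
  top_eq := eq_top_iff.mpr fun f _ => by simp [mem_saturationIdeal]
  antitone_succ n _ hf := le_trans (by simp) (F.mem_saturationIdeal.mp hf)
  mul_le m n := Ideal.mul_le.mpr fun f hf g hg => by
    rw [mem_saturationIdeal, Nat.cast_add]
    exact (add_le_add hf hg).trans (F.nubar_add_nubar_le_nubar_mul f g)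

theorem le_saturation (m : ℕ) : F.I m ≤ F.saturation.I m :=
  fun _ => F.le_nubar_of_mem

theorem nubar_saturation (f : R) : F.saturation.nubar f = F.nubar f :=
  le_antisymm
    (F.saturation.nubar_le_of_forall_pow_mem fun _ _ hm ht =>
      ENNReal.div_le_of_le_mul' (ht.trans (F.nubar_pow_le f hm)))
    (F.nubar_mono F.le_saturation f)

theorem le_saturation_of_nubar_eq {J : RingFiltration R} (hJ : ∀ f, J.nubar f = F.nubar f)
    (m : ℕ) : J.I m ≤ F.saturation.I m :=
  fun f hf => F.mem_saturationIdeal.mpr (hJ f ▸ J.le_nubar_of_mem hf)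

end RingFiltration

theorem saturation_exists_general {R : Type*} [CommRing R]
    (F : RingFiltration R) :
    ∃ K : RingFiltration R,
      (∀ m : ℕ, ∀ f : R, f ∈ K.I m ↔ (m : ℝ≥0∞) ≤ F.nubar f) ∧
      (∀ m, F.I m ≤ K.I m) ∧
      (∀ f, K.nubar f = F.nubar f) ∧
      (∀ J : RingFiltration R, (∀ f, J.nubar f = F.nubar f) → ∀ m, J.I m ≤ K.I m) :=
  ⟨F.saturation, fun _ _ => F.mem_saturationIdeal, F.le_saturation, F.nubar_saturation,
    fun _ hJ => F.le_saturation_of_nubar_eq hJ⟩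

/-- For a filtration `I` of a Noetherian ring `R`, the sets
`K(I)_m = {f : ν̄_I(f) ≥ m}` form a filtration of ideals containing `I`, with
`ν̄_{K(I)} = ν̄_I`, and `K(I)` is the unique largest filtration `J` with `ν̄_J = ν̄_I`. -/
theorem saturation_exists {R : Type*} [CommRing R] [IsNoetherianRing R]
    (F : RingFiltration R) :
    ∃ K : RingFiltration R,
      (∀ m : ℕ, ∀ f : R, f ∈ K.I m ↔ (m : ℝ≥0∞) ≤ F.nubar f) ∧
      (∀ m, F.I m ≤ K.I m) ∧
      (∀ f, K.nubar f = F.nubar f) ∧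
      (∀ J : RingFiltration R, (∀ f, J.nubar f = F.nubar f) → ∀ m, J.I m ≤ K.I m) :=
  saturation_exists_general F
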